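/- Let (v_n)_{n≥1} be a sequence of finite words over a finite alphabet with v₁ nonempty, and let x be the sesquipower induced by (v_n): the infinite word that is the limit of w₁ = v₁, w_{n+1} = w_n v_n w_n. Suppose x is aperiodic and avoids k-anti-powers for some integer k ≥ 2. Then there exists a nonempty finite word u with |u| ≤ k - 1 such that for every ℓ > 0 there is some n > 0 for which u^ℓ is a factor of v_n. -/

import Mathlib

/-- `u ^ ℓ` : the finite word `u` concatenated with itself `ℓ` times. -/
def powWord {A : Type*} (u : List A) (ℓ : ℕ) : List A :=
  (List.replicate ℓ u).flatten

/-- The `i`-th block of length `m` of a finite word `v`. -/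
def listBlock {A : Type*} (v : List A) (m i : ℕ) : List A :=
  (v.drop (i * m)).take m

/-- `v` is a `k`-anti-power: `v` consists of `k` pairwise distinct blocks of equal
positive length. -/
def IsKAntipower {A : Type*} (k : ℕ) (v : List A) : Prop :=
  ∃ m : ℕ, 1 ≤ m ∧ v.length = k * m ∧
    ∀ i < k, ∀ j < k, i ≠ j → listBlock v m i ≠ listBlock v m j

/-- The finite word `u` occurs in the infinite word `x` at position `i`. -/
def OccursAt {A : Type*} (x : ℕ → A) (u : List A) (i : ℕ) : Prop :=
  u = (List.range u.length).map fun j => x (i + j)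

/-- The finite word `u` is a factor of the infinite word `x`. -/
def IsFactor {A : Type*} (x : ℕ → A) (u : List A) : Prop :=
  ∃ i, OccursAt x u i

/-- `x` is eventually periodic: some suffix of `x` is periodic with period `p > 0`. -/
def EventuallyPeriodic {A : Type*} (x : ℕ → A) : Prop :=
  ∃ j p : ℕ, 0 < p ∧ ∀ n, j ≤ n → x (n + p) = x n

/-- The sequence `w₁ = v₁`, `w_{n+1} = w_n v_n w_n` (here 0-indexed: `v n` is `v_{n+1}`
and `sesq v n` is `w_{n+1}`). -/
def sesq {A : Type*} (v : ℕ → List A) : ℕ → List A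
  | 0 => v 0
  | n + 1 => sesq v n ++ v n ++ sesq v n

/-!
An infinite word avoiding `k`-anti-powers contains arbitrarily long factors with a period
`p < k`: among the first `k` blocks of any length two coincide, and comparing the coinciding
pairs for two nearby block lengths produces a long factor with a bounded period, which an
anti-power of blocks of length `p + 1` then cuts down below `k`.

In the sesquipower `x`, a long `p`-periodic factor lies in some `w_{n+1} = w_n v_n w_n`.
Descending to the first `n` for which it is not inside a copy of `w_n`, it splits into a
periodic suffix of `w_n`, a periodic factor of `v_n` and a periodic prefix of `x`. If the
powers of each short word in the `v_n` had bounded exponent, the middle part would be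
bounded; aperiodicity of `x` bounds the periodic prefixes, and hence also the periodic
suffixes of the `w_n`. So the factor would have bounded length, a contradiction.
-/

section

variable {A : Type*}

section Factors

variable (x : ℕ → A)

def factorAt (s L : ℕ) : List A := (List.range L).map fun j => x (s + j)

@[simp] lemma length_factorAt (s L : ℕ) : (factorAt x s L).length = L := by simp [factorAt]

lemma isFactor_factorAt (s L : ℕ) : IsFactor x (factorAt x s L) := ⟨s, by simp [OccursAt, factorAt]⟩

lemma factorAt_eq_factorAt_iff {s₁ s₂ L : ℕ} :
    factorAt x s₁ L = factorAt x s₂ L ↔ ∀ r < L, x (s₁ + r) = x (s₂ + r) := by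
  simp [factorAt, List.map_inj_left]

lemma factorAt_append (s L₁ L₂ : ℕ) :
    factorAt x s (L₁ + L₂) = factorAt x s L₁ ++ factorAt x (s + L₁) L₂ := by
  simp only [factorAt, List.range_add, List.map_append, List.map_map]
  congr 1
  ext j
  simp [Function.comp, add_assoc]

lemma factorAt_infix_factorAt {s L s₀ L₀ : ℕ} (h₀ : s₀ ≤ s) (hL : s + L ≤ s₀ + L₀) :
    factorAt x s L <:+: factorAt x s₀ L₀ := by
  obtain ⟨d, rfl⟩ := Nat.exists_eq_add_of_le h₀
  obtain ⟨e, rfl⟩ : ∃ e, L₀ = d + L + e := ⟨L₀ - d - L, by omega⟩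
  rw [factorAt_append, factorAt_append]
  exact ⟨_, _, rfl⟩

lemma listBlock_factorAt {s L m i : ℕ} (h : i * m + m ≤ L) :
    listBlock (factorAt x s L) m i = factorAt x (s + i * m) m := by
  obtain ⟨e, rfl⟩ : ∃ e, L = i * m + m + e := ⟨L - (i * m + m), by omega⟩
  rw [listBlock, factorAt_append, factorAt_append, List.append_assoc,
    List.drop_left' (length_factorAt x s _), List.take_left' (length_factorAt x _ _)]

lemma powWord_succ (u : List A) (ℓ : ℕ) : powWord u (ℓ + 1) = u ++ powWord u ℓ := by
  simp [powWord, List.replicate_succ]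

lemma powWord_prefix_powWord (u : List A) {ℓ₁ ℓ₂ : ℕ} (h : ℓ₁ ≤ ℓ₂) :
    powWord u ℓ₁ <+: powWord u ℓ₂ := by
  obtain ⟨d, rfl⟩ := Nat.exists_eq_add_of_le h
  simp only [powWord, List.replicate_add, List.flatten_append]
  exact List.prefix_append _ _

end Factors

def HasPeriodOn (x : ℕ → A) (s L p : ℕ) : Prop :=
  ∀ r, r + p < L → x (s + r + p) = x (s + r)

namespace HasPeriodOn

variable {x : ℕ → A} {s L p : ℕ}

lemma restrict (h : HasPeriodOn x s L p) {s' L' : ℕ} (hs : s ≤ s') (hL : s' + L' ≤ s + L) :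
    HasPeriodOn x s' L' p := by
  intro r hr
  have := h (s' - s + r) (by omega)
  rwa [show s + (s' - s + r) = s' + r by omega] at this

lemma of_shift {c N : ℕ} (hshift : ∀ t < N, x (c + t) = x t) (h : HasPeriodOn x s L p)
    (hs : c ≤ s) (hL : s + L ≤ c + N) : HasPeriodOn x (s - c) L p := by
  intro r hr
  have h₁ := hshift (s - c + r + p) (by omega)
  have h₂ := hshift (s - c + r) (by omega)
  rw [show c + (s - c + r + p) = s + r + p by omega] at h₁
  rw [show c + (s - c + r) = s + r by omega] at h₂
  rw [← h₁, ← h₂]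
  exact h r hr

lemma apply_mod (hp : 0 < p) (h : HasPeriodOn x s L p) {r : ℕ} (hr : r < L) :
    x (s + r) = x (s + r % p) := by
  induction r using Nat.strong_induction_on with
  | _ r ih =>
    rcases lt_or_ge r p with hrp | hrp
    · rw [Nat.mod_eq_of_lt hrp]
    · rw [Nat.mod_eq_sub_mod hrp, ← ih (r - p) (by omega) (by omega), ← h (r - p) (by omega)]
      congr 1
      omega

lemma apply_eq_of_modEq (hp : 0 < p) (h : HasPeriodOn x s L p) {a b : ℕ} (ha : a < L)
    (hb : b < L) (hab : a ≡ b [MOD p]) : x (s + a) = x (s + b) := by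
  rw [h.apply_mod hp ha, h.apply_mod hp hb, show a % p = b % p from hab]

/-- The window meets every residue class mod `p`, so shifting by `δ` preserves the whole
`p`-periodic pattern. -/
lemma of_shifted_window_eq (hp : 0 < p) (h : HasPeriodOn x s L p) {N δ σ : ℕ}
    (hNδ : N + δ + p ≤ L) (hwin : ∀ t < p, x (s + N + t) = x (s + N + δ + t))
    (hσ : σ ≡ δ [MOD p]) : HasPeriodOn x s L σ := by
  intro r hr
  have : NeZero p := ⟨hp.ne'⟩
  set t := ((r : ZMod p) - N).val
  have ht : t < p := ZMod.val_lt _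
  have hNt : N + t ≡ r [MOD p] := (ZMod.natCast_eq_natCast_iff _ _ _).1 (by simp [t])
  calc x (s + r + σ) = x (s + (N + δ + t)) := by
        rw [add_assoc]
        exact h.apply_eq_of_modEq hp hr (by omega) (by
          rw [add_right_comm]; exact hNt.symm.add hσ)
    _ = x (s + (N + t)) := by rw [← add_assoc, ← add_assoc, ← hwin t ht, add_assoc]
    _ = x (s + r) := h.apply_eq_of_modEq hp (by omega) (by omega) hNt

lemma powWord_factorAt (h : HasPeriodOn x s L p) {ℓ : ℕ} (hℓ : ℓ * p ≤ L) :
    powWord (factorAt x s p) ℓ = factorAt x s (ℓ * p) := by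
  induction ℓ with
  | zero => simp [powWord, factorAt]
  | succ n ih =>
    rw [powWord_succ, ih (by nlinarith), add_one_mul, add_comm, factorAt_append]
    congr 1
    refine (factorAt_eq_factorAt_iff x).2 fun r hr => ?_
    rw [add_right_comm]
    exact (h r (by nlinarith)).symm

end HasPeriodOn

def AvoidsAntipowers (k : ℕ) (x : ℕ → A) : Prop :=
  ∀ w : List A, IsFactor x w → ¬ IsKAntipower k w

section Antipowers

variable {k : ℕ} {x : ℕ → A}

lemma AvoidsAntipowers.exists_eq_blocks (havoid : AvoidsAntipowers k x) (s : ℕ) {m : ℕ}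
    (hm : 0 < m) : ∃ i j, i < j ∧ j < k ∧ ∀ r < m, x (s + i * m + r) = x (s + j * m + r) := by
  by_contra! hne
  have hblock : ∀ i < k, listBlock (factorAt x s (k * m)) m i = factorAt x (s + i * m) m :=
    fun i hi => listBlock_factorAt x (by nlinarith)
  refine havoid _ (isFactor_factorAt x s (k * m)) ⟨m, hm, length_factorAt x s _, ?_⟩
  have hlt : ∀ i j, i < j → j < k →
      listBlock (factorAt x s (k * m)) m i ≠ listBlock (factorAt x s (k * m)) m j := by
    intro i j hij hjk heq
    rw [hblock i (hij.trans hjk), hblock j hjk, factorAt_eq_factorAt_iff] at heq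
    obtain ⟨r, hr, hne⟩ := hne i j hij hjk
    exact hne (heq r hr)
  intro i hi j hj hij
  rcases hij.lt_or_gt with h | h
  · exact hlt i j h hj
  · exact (hlt j i h hi).symm

lemma hasPeriodOn_of_blocks_eq {i d m ε : ℕ}
    (h₁ : ∀ r < m, x (i * m + r) = x ((i + d) * m + r))
    (h₂ : ∀ r < m + ε, x (i * (m + ε) + r) = x ((i + d) * (m + ε) + r)) :
    HasPeriodOn x ((i + d) * m + i * ε) (m - i * ε + d * ε) (d * ε) := by
  intro r hr
  calc x ((i + d) * m + i * ε + r + d * ε) = x ((i + d) * (m + ε) + r) := by congr 1; ring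
    _ = x (i * (m + ε) + r) := (h₂ r (by omega)).symm
    _ = x (i * m + (i * ε + r)) := by congr 1; ring
    _ = x ((i + d) * m + (i * ε + r)) := h₁ _ (by omega)
    _ = x ((i + d) * m + i * ε + r) := by rw [add_assoc]

lemma AvoidsAntipowers.exists_hasPeriodOn_le (havoid : AvoidsAntipowers k x) (T : ℕ) :
    ∃ s q, 0 < q ∧ q ≤ k * (k * k) ∧ HasPeriodOn x s T q := by
  choose i j hij hjk hblock using fun m => havoid.exists_eq_blocks 0 (Nat.add_one_pos m)
  set M := T + k * (k * k)
  have hmaps : ∀ t ∈ Finset.range (k * k + 1),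
      (i (M + t), j (M + t)) ∈ Finset.range k ×ˢ Finset.range k := by
    intro t _
    simpa using ⟨(hij (M + t)).trans (hjk _), hjk _⟩
  -- two block lengths `m < m + ε ≤ m + k²` share the positions of a pair of equal blocks
  have hcard : (Finset.range k ×ˢ Finset.range k).card < (Finset.range (k * k + 1)).card := by
    simp
  obtain ⟨t₁, ht₁, t₂, ht₂, hne, heq⟩ := Finset.exists_ne_map_eq_of_card_lt_of_maps_to hcard hmaps
  wlog hlt : t₁ < t₂ generalizing t₁ t₂
  · exact this t₂ ht₂ t₁ ht₁ hne.symm heq.symm (by omega)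
  obtain ⟨hi₂, hj₂⟩ := Prod.ext_iff.1 heq
  simp only at hi₂ hj₂
  rw [Finset.mem_range] at ht₂
  have hij₁ := hij (M + t₁)
  have hjk₁ := hjk (M + t₁)
  set m := M + t₁ + 1
  set ε := t₂ - t₁
  set d := j (M + t₁) - i (M + t₁)
  have hj : j (M + t₁) = i (M + t₁) + d := by omega
  have h₁ : ∀ r < m, x (i (M + t₁) * m + r) = x ((i (M + t₁) + d) * m + r) := by
    intro r hr
    have := hblock (M + t₁) r hr
    rwa [zero_add, zero_add, hj] at this
  have h₂ : ∀ r < m + ε, x (i (M + t₁) * (m + ε) + r) = x ((i (M + t₁) + d) * (m + ε) + r) := by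
    rw [show m + ε = M + t₂ + 1 by omega, ← hj, hi₂, hj₂]
    intro r hr
    have := hblock (M + t₂) r hr
    rwa [zero_add, zero_add] at this
  have hiε : i (M + t₁) * ε ≤ k * (k * k) := Nat.mul_le_mul (by omega) (by omega)
  have hdε : d * ε ≤ k * (k * k) := Nat.mul_le_mul (by omega) (by omega)
  refine ⟨_, d * ε, Nat.mul_pos (by omega) (by omega), hdε,
    (hasPeriodOn_of_blocks_eq h₁ h₂).restrict le_rfl (by omega)⟩

lemma HasPeriodOn.exists_period_lt_of_avoidsAntipowers (havoid : AvoidsAntipowers k x)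
    {s L p : ℕ} (hp : 0 < p) (h : HasPeriodOn x s L p) (hL : k * (p + 1) ≤ L) :
    ∃ σ, 0 < σ ∧ σ < k ∧ HasPeriodOn x s L σ := by
  obtain ⟨i, j, hij, hjk, heq⟩ := havoid.exists_eq_blocks s (Nat.add_one_pos p)
  have hj : j * (p + 1) = i * (p + 1) + (j - i) * (p + 1) := by
    rw [← add_mul, Nat.add_sub_cancel' hij.le]
  have hjL : (j + 1) * (p + 1) ≤ k * (p + 1) := Nat.mul_le_mul_right _ hjk
  refine ⟨j - i, by omega, by omega, h.of_shifted_window_eq hp (N := i * (p + 1))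
    (δ := (j - i) * (p + 1)) (by rw [add_one_mul] at hjL; omega) ?_ ?_⟩
  · intro t ht
    have := heq t (by omega)
    rwa [hj, ← add_assoc] at this
  · rw [mul_add_one]
    exact (Nat.modEq_iff_dvd' (by omega)).2 (by simp)

lemma AvoidsAntipowers.exists_hasPeriodOn_lt (havoid : AvoidsAntipowers k x) (T : ℕ) :
    ∃ s p, 0 < p ∧ p < k ∧ HasPeriodOn x s T p := by
  obtain ⟨s, q, hq, hqk, h⟩ := havoid.exists_hasPeriodOn_le (T + k * (k * (k * k) + 1))
  obtain ⟨σ, hσ, hσk, hσper⟩ :=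
    h.exists_period_lt_of_avoidsAntipowers havoid hq (by nlinarith)
  exact ⟨s, σ, hσ, hσk, hσper.restrict le_rfl (by omega)⟩

end Antipowers

section Sesquipower

variable {v : ℕ → List A}

lemma length_sesq_succ (n : ℕ) :
    (sesq v (n + 1)).length = (sesq v n).length + (v n).length + (sesq v n).length := by
  simp [sesq, add_assoc]

lemma monotone_length_sesq : Monotone fun n => (sesq v n).length :=
  monotone_nat_of_le_succ fun n => by simp only [length_sesq_succ]; omega

lemma lt_length_sesq (hv : v 0 ≠ []) (n : ℕ) : n < (sesq v n).length := by
  induction n with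
  | zero => simpa [sesq, List.length_pos_iff] using hv
  | succ n ih => rw [length_sesq_succ]; omega

variable {x : ℕ → A} {p : ℕ}

lemma lt_of_hasPeriodOn_of_infix {ℓ : ℕ}
    (hℓ : ∀ u : List A, u.length = p → ∀ n, ¬ powWord u ℓ <:+: v n) {s L n : ℕ}
    (h : HasPeriodOn x s L p) (hin : factorAt x s L <:+: v n) : L < ℓ * p := by
  by_contra! hL
  refine hℓ (factorAt x s p) (length_factorAt x s p) n ?_
  rw [h.powWord_factorAt hL]
  exact (factorAt_infix_factorAt x le_rfl (by omega)).trans hin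

variable (hx : ∀ n, OccursAt x (sesq v n) 0)
include hx

lemma eq_factorAt_and_apply_add_eq (n : ℕ) :
    v n = factorAt x (sesq v n).length (v n).length ∧
      ∀ t < (sesq v n).length, x ((sesq v n).length + (v n).length + t) = x t := by
  set a := (sesq v n).length
  have h : sesq v n ++ v n ++ sesq v n
      = factorAt x 0 a ++ factorAt x a (v n).length ++ factorAt x (a + (v n).length) a := by
    have : sesq v (n + 1) = factorAt x 0 (sesq v (n + 1)).length := hx (n + 1)
    rwa [length_sesq_succ, factorAt_append, factorAt_append, zero_add, zero_add] at this
  obtain ⟨h₁, h₂⟩ := List.append_inj h (by simp [a])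
  refine ⟨(List.append_inj h₁ (by simp [a])).2, fun t ht => ?_⟩
  have h₀ : sesq v n = factorAt x 0 a := hx n
  rw [h₀, factorAt_eq_factorAt_iff] at h₂
  simpa using (h₂ t ht).symm

lemma sub_le_of_hasPeriodOn_suffix (hv : v 0 ≠ []) {P : ℕ}
    (hP : ∀ M, HasPeriodOn x 0 M p → M ≤ P) (n s : ℕ) (hs : s ≤ (sesq v n).length)
    (h : HasPeriodOn x s ((sesq v n).length - s) p) :
    (sesq v n).length - s ≤ (sesq v P).length := by
  induction n generalizing s with
  | zero => exact (Nat.sub_le _ _).trans (monotone_length_sesq (Nat.zero_le P))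
  | succ n ih =>
    obtain ⟨-, hshift⟩ := eq_factorAt_and_apply_add_eq hx n
    rw [length_sesq_succ] at hs h ⊢
    set a := (sesq v n).length
    set c := a + (v n).length
    by_cases hcs : c ≤ s
    · have := ih (s - c) (by omega) (by
        rw [show a - (s - c) = a + (v n).length + a - s by omega]
        exact h.of_shift hshift hcs (by omega))
      omega
    · -- the suffix contains the final copy of `w_n`, which is a prefix of `x`
      have hpre : a ≤ P := hP a (by
        simpa using (h.restrict (s' := c) (L' := a) (by omega) (by omega)).of_shift hshift le_rfl
          (by omega))
      have hmono : (sesq v (n + 1)).length ≤ (sesq v P).length :=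
        monotone_length_sesq ((lt_length_sesq hv n).trans_le hpre)
      rw [length_sesq_succ] at hmono
      omega

lemma length_le_of_hasPeriodOn (hv : v 0 ≠ []) {P ℓ : ℕ}
    (hP : ∀ M, HasPeriodOn x 0 M p → M ≤ P)
    (hℓ : ∀ u : List A, u.length = p → ∀ n, ¬ powWord u ℓ <:+: v n) (n s L : ℕ)
    (hsL : s + L ≤ (sesq v n).length) (h : HasPeriodOn x s L p) :
    L ≤ (sesq v P).length + ℓ * p + P := by
  induction n generalizing s L with
  | zero =>
    have := lt_of_hasPeriodOn_of_infix hℓ h (n := 0) (by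
      rw [show v 0 = factorAt x 0 (sesq v 0).length from hx 0]
      exact factorAt_infix_factorAt x (Nat.zero_le _) (by omega))
    omega
  | succ n ih =>
    obtain ⟨hvn, hshift⟩ := eq_factorAt_and_apply_add_eq hx n
    rw [length_sesq_succ] at hsL
    set a := (sesq v n).length
    set c := a + (v n).length
    by_cases hleft : s + L ≤ a
    · exact ih s L hleft h
    by_cases hright : c ≤ s
    · exact ih (s - c) L (by omega) (h.of_shift hshift hright (by omega))
    have hsuf : a - s ≤ (sesq v P).length := by
      by_cases has : a ≤ s
      · omega
      exact sub_le_of_hasPeriodOn_suffix hx hv hP n s (by omega) (h.restrict le_rfl (by omega))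
    have hmid : min (s + L) c - max s a < ℓ * p :=
      lt_of_hasPeriodOn_of_infix hℓ (h.restrict (le_max_left s a) (by omega)) (n := n)
        (hvn ▸ factorAt_infix_factorAt x (le_max_right s a) (by omega))
    have hpre : s + L - c ≤ P := by
      by_cases hcL : s + L ≤ c
      · omega
      exact hP _ (by
        simpa using (h.restrict (s' := c) (L' := s + L - c) (by omega) (by omega)).of_shift
          hshift le_rfl (by omega))
    omega

end Sesquipower

open Filter in
lemma exists_uniform_powWord_not_infix [Finite A] {ι : Type*} (w : ι → List A) (N : ℕ)
    (h : ∀ u : List A, u ≠ [] → u.length ≤ N → ∃ ℓ, ∀ i, ¬ powWord u ℓ <:+: w i) :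
    ∃ ℓ, ∀ u : List A, u ≠ [] → u.length ≤ N → ∀ i, ¬ powWord u ℓ <:+: w i := by
  have hev : ∀ u ∈ {u : List A | u.length ≤ N},
      ∀ᶠ ℓ in atTop, u ≠ [] → ∀ i, ¬ powWord u ℓ <:+: w i := by
    intro u hu
    by_cases hu₀ : u = []
    · exact .of_forall fun _ h => absurd hu₀ h
    obtain ⟨ℓ₀, hℓ₀⟩ := h u hu₀ hu
    filter_upwards [eventually_ge_atTop ℓ₀] with ℓ hℓ _ i hi
    exact hℓ₀ i ((powWord_prefix_powWord u hℓ).isInfix.trans hi)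
  obtain ⟨ℓ, hℓ⟩ := ((List.finite_length_le A N).eventually_all.2 hev).exists
  exact ⟨ℓ, fun u hu₀ hu => hℓ u hu hu₀⟩

open Filter in
lemma exists_bound_hasPeriodOn_prefix {x : ℕ → A} (haper : ¬ EventuallyPeriodic x) (N : ℕ) :
    ∃ P, ∀ p, 0 < p → p ≤ N → ∀ M, HasPeriodOn x 0 M p → M ≤ P := by
  have hev : ∀ p ∈ Set.Ioc 0 N, ∀ᶠ P in atTop, ∀ M, HasPeriodOn x 0 M p → M ≤ P := by
    intro p hp
    obtain ⟨P, hP⟩ : ∃ P, ∀ M, HasPeriodOn x 0 M p → M ≤ P := by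
      by_contra! hunb
      refine haper ⟨0, p, hp.1, fun n _ => ?_⟩
      obtain ⟨M, hM, hPM⟩ := hunb (n + p)
      simpa using hM n (by omega)
    filter_upwards [eventually_ge_atTop P] with P' hP' M hM using (hP M hM).trans hP'
  obtain ⟨P, hP⟩ := ((Set.finite_Ioc 0 N).eventually_all.2 hev).exists
  exact ⟨P, fun p hp hpN => hP p ⟨hp, hpN⟩⟩

end

theorem statement15_general {A : Type*} [Finite A] (v : ℕ → List A) (hv : v 0 ≠ [])
    (x : ℕ → A) (hx : ∀ n, OccursAt x (sesq v n) 0)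
    (k : ℕ)
    (haper : ¬ EventuallyPeriodic x)
    (havoid : ∀ w : List A, IsFactor x w → ¬ IsKAntipower k w) :
    ∃ u : List A, u ≠ [] ∧ u.length ≤ k - 1 ∧
      ∀ ℓ : ℕ, 0 < ℓ → ∃ n : ℕ, powWord u ℓ <:+: v n := by
  by_contra! hcon
  obtain ⟨ℓ, hℓ⟩ := exists_uniform_powWord_not_infix v (k - 1) fun u hu hlen =>
    (hcon u hu hlen).imp fun _ h => h.2
  obtain ⟨P, hP⟩ := exists_bound_hasPeriodOn_prefix haper (k - 1)
  set T := (sesq v P).length + ℓ * (k - 1) + P + 1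
  obtain ⟨s, p, hp, hpk, hrun⟩ := AvoidsAntipowers.exists_hasPeriodOn_lt havoid T
  have hT := length_le_of_hasPeriodOn hx hv (hP p hp (by omega))
    (fun u hu => hℓ u (List.ne_nil_of_length_pos (by omega)) (by omega)) (s + T) s T
    ((lt_length_sesq hv (s + T)).le.trans' (by omega)) hrun
  have : ℓ * p ≤ ℓ * (k - 1) := Nat.mul_le_mul_left ℓ (by omega)
  omega

/-- Let `(v_n)` be a sequence of finite words over a finite alphabet
with `v₁` nonempty, and let `x` be the induced sesquipower (the infinite word having every
`w_n` as a prefix, where `w₁ = v₁` and `w_{n+1} = w_n v_n w_n`).  If `x` is aperiodic and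
avoids `k`-anti-powers for some `k ≥ 2`, then there is a nonempty word `u` with
`|u| ≤ k - 1` such that for every `ℓ > 0`, `u^ℓ` is a factor of some `v_n`. -/
theorem statement15 {A : Type*} [Finite A] (v : ℕ → List A) (hv : v 0 ≠ [])
    (x : ℕ → A) (hx : ∀ n, OccursAt x (sesq v n) 0)
    (k : ℕ) (hk : 2 ≤ k)
    (haper : ¬ EventuallyPeriodic x)
    (havoid : ∀ w : List A, IsFactor x w → ¬ IsKAntipower k w) :
    ∃ u : List A, u ≠ [] ∧ u.length ≤ k - 1 ∧
      ∀ ℓ : ℕ, 0 < ℓ → ∃ n : ℕ, powWord u ℓ <:+: v n :=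
  statement15_general v hv x hx k haper havoid
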